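/- Let $A \in \mathbb{Q}(p,q)$ and let $m \geq n \geq 0$ be integers. Suppose that $A \cdot \binom{m+t}{n}_q \in \mathbb{Q}[p,p^{-1},q,q^{-1}]$ for all $t = 1, \ldots, n+1$, where $\binom{\cdot}{\cdot}_q$ is the balanced quantum binomial coefficient. Then $A \in \mathbb{Q}[p,p^{-1},q,q^{-1}]$. -/

import Mathlib

noncomputable section

open Finset

/-- The field `ℚ(p,q)` of rational functions in two variables. -/
abbrev Kpq : Type := FractionRing (MvPolynomial (Fin 2) ℚ)

/-- The variable `p`. -/
def pv : Kpq := algebraMap (MvPolynomial (Fin 2) ℚ) Kpq (MvPolynomial.X 0)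

/-- The variable `q`. -/
def qv : Kpq := algebraMap (MvPolynomial (Fin 2) ℚ) Kpq (MvPolynomial.X 1)

/-- The Laurent polynomial subring `𝒜 = ℚ[p,p⁻¹,q,q⁻¹] ⊆ ℚ(p,q)`. -/
def LaurentA : Subalgebra ℚ Kpq :=
  Algebra.adjoin ℚ ({pv, pv⁻¹, qv, qv⁻¹} : Set Kpq)

/-- The balanced quantum integer `[l] = q^{l-1} + q^{l-3} + ⋯ + q^{1-l}
  (= (q^l - q^{-l})/(q - q^{-1}))`. -/
def qInt (l : ℕ) : Kpq := ∑ k ∈ Finset.range l, qv ^ ((l : ℤ) - 1 - 2 * k)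

/-- The quantum factorial `[n]!`. -/
def qFact (n : ℕ) : Kpq := ∏ l ∈ Finset.range n, qInt (l + 1)

/-- The balanced quantum binomial coefficient `[m choose n] = [m][m-1]⋯[m-n+1]/[n]!`. -/
def qBinom (m n : ℕ) : Kpq := (∏ k ∈ Finset.range n, qInt (m - k)) / qFact n

/-! Each pair of consecutive hypotheses, combined through the balanced Pascal rule
`[M+1, N+1] = q^{-(N+1)} [M, N+1] + q^{M-N} [M, N]`, yields the same hypothesis with `n`
replaced by `n - 1` (and one value of `t` fewer), because the powers of `q` are units of the
Laurent ring. Descending to `n = 0`, where `[m+1, 0] = 1`, gives `A ∈ 𝒜`. -/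

lemma qv_ne_zero : qv ≠ 0 :=
  (map_ne_zero_iff _ (IsFractionRing.injective (MvPolynomial (Fin 2) ℚ) Kpq)).mpr
    (MvPolynomial.X_ne_zero 1)

lemma zpow_qv_mem_laurentA (z : ℤ) : qv ^ z ∈ LaurentA := by
  have hq : qv ∈ LaurentA := Algebra.subset_adjoin (by simp)
  have hq_inv : qv⁻¹ ∈ LaurentA := Algebra.subset_adjoin (by simp)
  cases z with
  | ofNat k => rw [Int.ofNat_eq_natCast, zpow_natCast]; exact pow_mem hq k
  | negSucc k => rw [zpow_negSucc, ← inv_pow]; exact pow_mem hq_inv (k + 1)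

@[simp]
lemma qInt_zero : qInt 0 = 0 := by
  simp [qInt]

lemma qInt_add (a b : ℕ) :
    qInt (a + b) = qv ^ (b : ℤ) * qInt a + qv ^ (-(a : ℤ)) * qInt b := by
  rw [qInt, Finset.sum_range_add, qInt, qInt, Finset.mul_sum, Finset.mul_sum]
  congr 1 <;> refine Finset.sum_congr rfl fun k _ => ?_ <;>
    rw [← zpow_add₀ qv_ne_zero] <;> push_cast <;> ring_nf

lemma qInt_ne_zero {N : ℕ} (hN : 0 < N) : qInt N ≠ 0 := by
  -- clearing the negative powers of `q` gives a polynomial whose value at `q = 1` is `N`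
  set P : MvPolynomial (Fin 2) ℚ := ∑ k ∈ Finset.range N, MvPolynomial.X 1 ^ (2 * (N - 1 - k))
  have hP : qv ^ ((N : ℤ) - 1) * qInt N = algebraMap _ Kpq P := by
    rw [qInt, Finset.mul_sum, map_sum]
    refine Finset.sum_congr rfl fun k hk => ?_
    rw [map_pow, ← qv, ← zpow_natCast, ← zpow_add₀ qv_ne_zero]
    have hk : k < N := Finset.mem_range.mp hk
    congr 1
    omega
  have hP_ne : P ≠ 0 := fun h0 => by
    have h1 := congrArg (MvPolynomial.eval fun _ => (1 : ℚ)) h0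
    simp [P] at h1
    omega
  intro h0
  rw [h0, mul_zero, eq_comm,
    map_eq_zero_iff _ (IsFractionRing.injective (MvPolynomial (Fin 2) ℚ) Kpq)] at hP
  exact hP_ne hP

lemma qFact_ne_zero (n : ℕ) : qFact n ≠ 0 :=
  Finset.prod_ne_zero_iff.mpr fun l _ => qInt_ne_zero l.succ_pos

@[simp]
lemma qBinom_zero_right (m : ℕ) : qBinom m 0 = 1 := by
  simp [qBinom, qFact]

lemma qBinom_eq_zero_of_lt {m n : ℕ} (h : m < n) : qBinom m n = 0 := by
  rw [qBinom, Finset.prod_eq_zero (Finset.mem_range.mpr h) (by simp), zero_div]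

lemma qBinom_succ_succ (m n : ℕ) :
    qBinom (m + 1) (n + 1) =
      qv ^ (-(n + 1 : ℤ)) * qBinom m (n + 1) + qv ^ ((m : ℤ) - n) * qBinom m n := by
  rcases lt_or_ge m n with hlt | hle
  · rw [qBinom_eq_zero_of_lt (by omega), qBinom_eq_zero_of_lt (by omega),
      qBinom_eq_zero_of_lt hlt]
    ring
  have hnum_succ : ∏ k ∈ Finset.range (n + 1), qInt (m + 1 - k) =
      (∏ k ∈ Finset.range n, qInt (m - k)) * qInt (m + 1) := by
    rw [Finset.prod_range_succ']
    simp
  have hnum : ∏ k ∈ Finset.range (n + 1), qInt (m - k) =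
      (∏ k ∈ Finset.range n, qInt (m - k)) * qInt (m - n) := Finset.prod_range_succ _ _
  have hfact : qFact (n + 1) = qFact n * qInt (n + 1) := Finset.prod_range_succ _ _
  have hsplit : qInt (m + 1) =
      qv ^ ((m : ℤ) - n) * qInt (n + 1) + qv ^ (-(n + 1 : ℤ)) * qInt (m - n) := by
    rw [show m + 1 = (n + 1) + (m - n) by omega, qInt_add, Nat.cast_sub hle]
    push_cast
    ring
  have := qFact_ne_zero n
  have := qInt_ne_zero n.succ_pos
  rw [qBinom, qBinom, qBinom, hnum_succ, hnum, hsplit, hfact]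
  field_simp
  ring

lemma qBinom_eq_sub (m n : ℕ) :
    qBinom m n = qv ^ ((n : ℤ) - m) * qBinom (m + 1) (n + 1)
      - qv ^ ((n : ℤ) - m - (n + 1)) * qBinom m (n + 1) := by
  rw [qBinom_succ_succ, mul_add, ← mul_assoc, ← mul_assoc, ← zpow_add₀ qv_ne_zero,
    ← zpow_add₀ qv_ne_zero]
  ring_nf
  simp

theorem mem_laurent_of_mul_qBinom_general (A : Kpq) (m n : ℕ)
    (h : ∀ t ∈ Finset.Icc 1 (n + 1), A * qBinom (m + t) n ∈ LaurentA) :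
    A ∈ LaurentA := by
  induction n with
  | zero => simpa using h 1 (by simp)
  | succ n ih =>
    refine ih fun t ht => ?_
    obtain ⟨ht1, ht2⟩ := Finset.mem_Icc.mp ht
    have h_next := h (t + 1) (Finset.mem_Icc.mpr ⟨by omega, by omega⟩)
    have h_this := h t (Finset.mem_Icc.mpr ⟨ht1, by omega⟩)
    rw [← add_assoc] at h_next
    rw [qBinom_eq_sub, mul_sub, mul_left_comm, mul_left_comm A]
    exact sub_mem (mul_mem (zpow_qv_mem_laurentA _) h_next)
      (mul_mem (zpow_qv_mem_laurentA _) h_this)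

/-- If `A·[m+t choose n] ∈ ℚ[p^{±1},q^{±1}]` for `t = 1,…,n+1`, then
`A ∈ ℚ[p^{±1},q^{±1}]`. -/
theorem mem_laurent_of_mul_qBinom (A : Kpq) (m n : ℕ) (hmn : n ≤ m)
    (h : ∀ t ∈ Finset.Icc 1 (n + 1), A * qBinom (m + t) n ∈ LaurentA) :
    A ∈ LaurentA :=
  mem_laurent_of_mul_qBinom_general A m n h
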